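/- arXiv:2506.17020 — 4 statements merged into one kernel-verified Lean document; each statement's English description precedes it below -/
import Mathlib

section
/- Every vertex (extreme point) of the fractional stable set polytope FSTAB(Γ) = {x ∈ ℝ^V : x_v ≥ 0 for all v, and x_u + x_v ≤ 1 for every edge (u,v)} of a finite graph Γ has all coordinates in {0, 1/2, 1}. -/
/-- The fractional stable set polytope of a graph `Γ`. -/
def FSTAB {V : Type*} (Γ : SimpleGraph V) : Set (V → ℝ) :=
  {x | (∀ v, 0 ≤ x v) ∧ ∀ u v, Γ.Adj u v → x u + x v ≤ 1}

/-- Every extreme point (vertex) of the fractional stable set polytope has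
all coordinates in `{0, 1/2, 1}`. -/
theorem fstab_vertex_half_integral {V : Type*} [Fintype V] (Γ : SimpleGraph V)
    (x : V → ℝ) (hx : x ∈ Set.extremePoints ℝ (FSTAB Γ)) :
    ∀ v, x v ∈ ({0, 1/2, 1} : Set ℝ) := by
  classical
  intro v₀
  by_contra hv₀
  simp only [Set.mem_insert_iff, Set.mem_singleton_iff, not_or] at hv₀
  obtain ⟨h0, hhalf, h1⟩ := hv₀
  obtain ⟨⟨hnn, hedge⟩, hext⟩ := hx
  -- perturbation direction
  set d : V → ℝ := fun w =>
    if 0 < x w ∧ x w < 1/2 then 1 else if 1/2 < x w ∧ x w ≠ 1 then -1 else 0 with hd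
  have hdval : ∀ w, d w = 0 ∨ d w = 1 ∨ d w = -1 := by
    intro w
    simp only [hd]
    split_ifs <;> simp
  have hdle : ∀ w, d w ≤ 1 := by
    intro w; rcases hdval w with h | h | h <;> rw [h] <;> norm_num
  have hdge : ∀ w, -1 ≤ d w := by
    intro w; rcases hdval w with h | h | h <;> rw [h] <;> norm_num
  have hdpos : ∀ w, d w ≠ 0 → 0 < x w := by
    intro w hw
    by_contra hc
    push_neg at hc
    apply hw
    simp only [hd]
    rw [if_neg, if_neg]
    · rintro ⟨h₁, _⟩; linarith
    · rintro ⟨h₁, _⟩; linarith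
  -- characterization of d, assuming x w ≤ 1
  have hchar : ∀ w, x w ≤ 1 →
      (d w = 1 ∧ 0 < x w ∧ x w < 1/2) ∨ (d w = -1 ∧ 1/2 < x w ∧ x w < 1) ∨
      (d w = 0 ∧ x w = 0 ∧ x w = 0) ∨ (d w = 0 ∧ x w = 1/2 ∧ x w = 1/2) ∨
      (d w = 0 ∧ x w = 1 ∧ x w = 1) := by
    intro w hw
    have hnw := hnn w
    by_cases hA : 0 < x w ∧ x w < 1/2
    · left
      refine ⟨?_, hA.1, hA.2⟩
      simp only [hd]; rw [if_pos hA]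
    by_cases hB : 1/2 < x w ∧ x w ≠ 1
    · right; left
      refine ⟨?_, hB.1, lt_of_le_of_ne hw hB.2⟩
      simp only [hd]; rw [if_neg hA, if_pos hB]
    · have hdz : d w = 0 := by simp only [hd]; rw [if_neg hA, if_neg hB]
      push_neg at hA hB
      rcases eq_or_lt_of_le hnw with h | h
      · right; right; left; exact ⟨hdz, h.symm, h.symm⟩
      · have h2 : 1/2 ≤ x w := hA h
        rcases eq_or_lt_of_le h2 with h3 | h3
        · right; right; right; left; exact ⟨hdz, h3.symm, h3.symm⟩
        · right; right; right; right; exact ⟨hdz, hB h3, hB h3⟩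
  -- slack lemma
  have hslack : ∀ u v, Γ.Adj u v → d u + d v ≠ 0 → x u + x v < 1 := by
    intro u v hadj hne
    rcases lt_or_eq_of_le (hedge u v hadj) with h | h
    · exact h
    exfalso
    have hu1 : x u ≤ 1 := by linarith [hnn v]
    have hv1 : x v ≤ 1 := by linarith [hnn u]
    rcases hchar u hu1 with ⟨e1, a1, b1⟩ | ⟨e1, a1, b1⟩ | ⟨e1, a1, b1⟩ | ⟨e1, a1, b1⟩ |
        ⟨e1, a1, b1⟩ <;>
      rcases hchar v hv1 with ⟨e2, a2, b2⟩ | ⟨e2, a2, b2⟩ | ⟨e2, a2, b2⟩ | ⟨e2, a2, b2⟩ |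
        ⟨e2, a2, b2⟩ <;>
      first
        | (apply hne; rw [e1, e2]; norm_num; done)
        | linarith
  -- the bad vertex has d v₀ ≠ 0
  have hdv₀ : d v₀ ≠ 0 := by
    simp only [hd]
    rcases lt_trichotomy (x v₀) (1/2) with h | h | h
    · rw [if_pos ⟨lt_of_le_of_ne (hnn v₀) (Ne.symm h0), h⟩]; norm_num
    · exact absurd h hhalf
    · rw [if_neg, if_pos ⟨h, h1⟩]
      · norm_num
      · rintro ⟨_, h2⟩; linarith
  -- choose ε
  have hne₁ : (Finset.univ : Finset V).Nonempty := ⟨v₀, Finset.mem_univ v₀⟩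
  have hne₂ : (Finset.univ : Finset (V × V)).Nonempty := ⟨(v₀, v₀), Finset.mem_univ _⟩
  set f : V → ℝ := fun w => if d w = 0 then 1 else x w with hf
  set g : V × V → ℝ := fun p =>
    if Γ.Adj p.1 p.2 ∧ d p.1 + d p.2 ≠ 0 then (1 - x p.1 - x p.2) / 2 else 1 with hg
  set ε₁ : ℝ := Finset.univ.inf' hne₁ f with hε₁
  set ε₂ : ℝ := Finset.univ.inf' hne₂ g with hε₂
  have hε₁pos : 0 < ε₁ := by
    rw [hε₁, Finset.lt_inf'_iff]
    intro w _
    simp only [hf]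
    split_ifs with h
    · norm_num
    · exact hdpos w h
  have hε₂pos : 0 < ε₂ := by
    rw [hε₂, Finset.lt_inf'_iff]
    intro p _
    simp only [hg]
    split_ifs with h
    · have := hslack p.1 p.2 h.1 h.2
      linarith
    · norm_num
  set ε : ℝ := min ε₁ ε₂ with hε
  have hεpos : 0 < ε := lt_min hε₁pos hε₂pos
  have hεle₁ : ∀ w, d w ≠ 0 → ε ≤ x w := by
    intro w hw
    have h1 : ε₁ ≤ f w := Finset.inf'_le f (Finset.mem_univ w)
    have h2 : f w = x w := by simp only [hf]; rw [if_neg hw]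
    calc ε ≤ ε₁ := min_le_left _ _
      _ ≤ f w := h1
      _ = x w := h2
  have hεle₂ : ∀ u v, Γ.Adj u v → d u + d v ≠ 0 → 2 * ε ≤ 1 - x u - x v := by
    intro u v hadj hne
    have h1 : ε₂ ≤ g (u, v) := Finset.inf'_le g (Finset.mem_univ (u, v))
    have h2 : g (u, v) = (1 - x u - x v) / 2 := by
      simp only [hg]; rw [if_pos ⟨hadj, hne⟩]
    have h3 : ε ≤ (1 - x u - x v) / 2 := le_trans (min_le_right _ _) (h1.trans_eq h2)
    linarith
  -- the two perturbed points
  set y : V → ℝ := fun w => x w + ε * d w with hy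
  set z : V → ℝ := fun w => x w - ε * d w with hz
  have hedgebound : ∀ u v, Γ.Adj u v → |ε * d u + ε * d v| ≤ 1 - x u - x v := by
    intro u v hadj
    by_cases hne : d u + d v = 0
    · have h : ε * d u + ε * d v = 0 := by rw [← mul_add, hne, mul_zero]
      rw [h, abs_zero]
      linarith [hedge u v hadj]
    · have h := hεle₂ u v hadj hne
      have h1 : ε * d u ≤ ε * 1 := mul_le_mul_of_nonneg_left (hdle u) hεpos.le
      have h2 : ε * d v ≤ ε * 1 := mul_le_mul_of_nonneg_left (hdle v) hεpos.le
      have h3 : ε * (-1) ≤ ε * d u := mul_le_mul_of_nonneg_left (hdge u) hεpos.le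
      have h4 : ε * (-1) ≤ ε * d v := mul_le_mul_of_nonneg_left (hdge v) hεpos.le
      rw [abs_le]
      constructor <;> linarith
  have hnnaux : ∀ w, ε * |d w| ≤ x w := by
    intro w
    by_cases hw : d w = 0
    · rw [hw, abs_zero, mul_zero]; exact hnn w
    · have h1 : |d w| ≤ 1 := by
        rcases hdval w with h | h | h <;> rw [h] <;> norm_num
      calc ε * |d w| ≤ ε * 1 := mul_le_mul_of_nonneg_left h1 hεpos.le
        _ = ε := mul_one ε
        _ ≤ x w := hεle₁ w hw
  have hymem : y ∈ FSTAB Γ := by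
    constructor
    · intro w
      have := hnnaux w
      have h2 : -(ε * |d w|) ≤ ε * d w := by
        have := neg_abs_le (d w)
        nlinarith [hεpos.le]
      simp only [hy]
      linarith
    · intro u v hadj
      have := hedgebound u v hadj
      have h1 : ε * d u + ε * d v ≤ |ε * d u + ε * d v| := le_abs_self _
      simp only [hy]
      linarith
  have hzmem : z ∈ FSTAB Γ := by
    constructor
    · intro w
      have := hnnaux w
      have h2 : ε * d w ≤ ε * |d w| := by
        have := le_abs_self (d w)
        nlinarith [hεpos.le]
      simp only [hz]
      linarith
    · intro u v hadj
      have := hedgebound u v hadj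
      have h1 : -(ε * d u + ε * d v) ≤ |ε * d u + ε * d v| := neg_le_abs _
      simp only [hz]
      linarith
  -- x is the midpoint of y and z
  have hseg : x ∈ openSegment ℝ y z := by
    refine ⟨1/2, 1/2, by norm_num, by norm_num, by norm_num, ?_⟩
    funext w
    simp only [hy, hz, Pi.add_apply, Pi.smul_apply, smul_eq_mul]
    ring
  have heq := (hext hymem hzmem hseg)
  have : y v₀ = x v₀ := by rw [heq]
  simp only [hy] at this
  have : ε * d v₀ = 0 := by linarith
  rcases mul_eq_zero.1 this with h | h
  · exact absurd h hεpos.ne'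
  · exact hdv₀ h
end

section
/- Let X_1, ..., X_t be Boolean random variables such that for every subset S ⊆ {1,...,t} one has Pr[∧_{i∈S} X_i = 1] ≤ ζ^{|S|} for some 0 ≤ ζ ≤ 1. Then for any ζ ≤ γ ≤ 1, Pr[∑_{i=1}^t X_i ≥ γ t] ≤ exp(−t · D(γ‖ζ)), where D(γ‖ζ) = γ ln(γ/ζ) + (1−γ) ln((1−γ)/(1−ζ)) is the binary relative entropy. -/
open MeasureTheory Real
open scoped ENNReal

/-- Generalized Chernoff bound (Panconesi–Srinivasan): if Boolean random
variables `X 1, …, X t` satisfy `Pr[∧_{i∈S} X i = 1] ≤ ζ^|S|` for every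
subset `S`, then for `ζ ≤ γ ≤ 1`,
`Pr[∑ i, X i ≥ γ t] ≤ exp(−t · D(γ‖ζ))` where
`D(γ‖ζ) = γ ln(γ/ζ) + (1−γ) ln((1−γ)/(1−ζ))`. -/
theorem generalized_chernoff {Ω : Type*} [MeasurableSpace Ω]
    (μ : Measure Ω) [IsProbabilityMeasure μ]
    (t : ℕ) (X : Fin t → Ω → ℝ)
    (hmeas : ∀ i, Measurable (X i))
    (hbool : ∀ i ω, X i ω = 0 ∨ X i ω = 1)
    (ζ : ℝ) (hζ0 : 0 ≤ ζ) (hζ1 : ζ ≤ 1)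
    (hcorr : ∀ S : Finset (Fin t),
      μ {ω | ∀ i ∈ S, X i ω = 1} ≤ ENNReal.ofReal (ζ ^ S.card))
    (γ : ℝ) (hγl : ζ ≤ γ) (hγu : γ ≤ 1) :
    μ {ω | γ * t ≤ ∑ i, X i ω} ≤
      ENNReal.ofReal
        (exp (-(t : ℝ) * (γ * log (γ / ζ) + (1 - γ) * log ((1 - γ) / (1 - ζ))))) := by
  have hμ1 : μ {ω | γ * t ≤ ∑ i, X i ω} ≤ 1 := prob_le_one
  rcases eq_or_lt_of_le hγl with hζγ | hζγ
  · -- case ζ = γ : bound is 1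
    subst hζγ
    have he : ζ * log (ζ / ζ) + (1 - ζ) * log ((1 - ζ) / (1 - ζ)) = 0 := by
      rcases eq_or_ne ζ 0 with h | h
      · simp [h]
      · rcases eq_or_ne ζ 1 with h1 | h1
        · simp [h1]
        · rw [div_self h, div_self (by intro hc; apply h1; linarith)]
          simp
    rw [he, mul_zero, exp_zero]
    simpa using hμ1
  rcases eq_or_lt_of_le hγu with hγ1 | hγ1
  · -- case γ = 1
    subst hγ1
    have hsub : {ω | (1:ℝ) * t ≤ ∑ i, X i ω} ⊆
        {ω | ∀ i ∈ (Finset.univ : Finset (Fin t)), X i ω = 1} := by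
      intro ω hω
      simp only [Set.mem_setOf_eq, one_mul] at hω ⊢
      intro j _
      by_contra hj
      have hj0 : X j ω = 0 := (hbool j ω).resolve_right hj
      have hlt : ∑ i, X i ω < ∑ _i : Fin t, (1:ℝ) := by
        refine Finset.sum_lt_sum (fun i _ => ?_) ⟨j, Finset.mem_univ j, ?_⟩
        · rcases hbool i ω with h | h <;> simp [h]
        · rw [hj0]; norm_num
      simp only [Finset.sum_const, Finset.card_univ, Fintype.card_fin, nsmul_eq_mul,
        mul_one] at hlt
      linarith
    have h1 := (measure_mono hsub).trans (hcorr Finset.univ)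
    rw [Finset.card_univ, Fintype.card_fin] at h1
    refine h1.trans (ENNReal.ofReal_le_ofReal ?_)
    rcases eq_or_lt_of_le hζ0 with hz | hz
    · rcases Nat.eq_zero_or_pos t with ht | ht
      · subst ht; simp
      · rw [← hz, zero_pow ht.ne']
        positivity
    · have : (1:ℝ) - 1 = 0 := by ring
      rw [this, zero_mul, add_zero, one_mul, log_div one_ne_zero hz.ne', log_one]
      rw [show -(t:ℝ) * (0 - log ζ) = (t:ℝ) * log ζ by ring, exp_nat_mul, exp_log hz]
  -- now ζ < γ < 1
  have h1γ : (0:ℝ) < 1 - γ := by linarith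
  have h1ζ : (0:ℝ) < 1 - ζ := by linarith
  rcases eq_or_lt_of_le hζ0 with hz | hζpos
  · -- ζ = 0 : exponent is nonnegative, bound ≥ 1
    rw [← hz]
    have he : 0 ≤ -(t:ℝ) * (γ * log (γ / 0) + (1 - γ) * log ((1 - γ) / (1 - 0))) := by
      rw [div_zero, log_zero, mul_zero, zero_add, sub_zero, div_one]
      have hlog : log (1 - γ) ≤ 0 := log_nonpos (by linarith) (by linarith)
      have ht : (0:ℝ) ≤ (t:ℝ) := Nat.cast_nonneg t
      have hx : (1 - γ) * log (1 - γ) ≤ 0 := mul_nonpos_iff.mpr (Or.inl ⟨h1γ.le, hlog⟩)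
      nlinarith [mul_nonneg ht (neg_nonneg.mpr hx)]
    refine hμ1.trans ?_
    rw [← ENNReal.ofReal_one]
    exact ENNReal.ofReal_le_ofReal (Real.one_le_exp he)
  -- main case : 0 < ζ < γ < 1
  have hγpos : 0 < γ := lt_trans hζpos hζγ
  set η : ℝ := (γ - ζ) / (ζ * (1 - γ)) with hη_def
  have hηpos : 0 < η := div_pos (by linarith) (mul_pos hζpos h1γ)
  have h1η : (0:ℝ) < 1 + η := by linarith
  set c : ℝ := exp (γ * t * log (1 + η)) with hc_def
  have hcpos : 0 < c := exp_pos _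
  set f : Ω → ℝ≥0∞ := fun ω => ENNReal.ofReal (∏ i, (1 + η * X i ω)) with hf_def
  have hXnn : ∀ i ω, 0 ≤ X i ω := fun i ω => by rcases hbool i ω with h | h <;> simp [h]
  have hf_meas : Measurable f := by
    apply Measurable.ennreal_ofReal
    exact Finset.measurable_prod _ (fun i _ => measurable_const.add (measurable_const.mul (hmeas i)))
  have hprod_exp : ∀ ω, ∏ i, (1 + η * X i ω) = exp ((∑ i, X i ω) * log (1 + η)) := by
    intro ω
    rw [Finset.sum_mul, Real.exp_sum]
    refine Finset.prod_congr rfl (fun i _ => ?_)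
    rcases hbool i ω with h | h <;> simp [h, exp_log h1η]
  have hsubset : {ω | γ * t ≤ ∑ i, X i ω} ⊆ {ω | ENNReal.ofReal c ≤ f ω} := by
    intro ω hω
    simp only [Set.mem_setOf_eq] at hω ⊢
    refine ENNReal.ofReal_le_ofReal ?_
    rw [hprod_exp ω, hc_def]
    exact exp_le_exp.mpr (mul_le_mul_of_nonneg_right hω (log_nonneg (by linarith)))
  have hmarkov : μ {ω | ENNReal.ofReal c ≤ f ω} ≤ (∫⁻ ω, f ω ∂μ) / ENNReal.ofReal c :=
    meas_ge_le_lintegral_div hf_meas.aemeasurable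
      (ne_of_gt (ENNReal.ofReal_pos.mpr hcpos)) ENNReal.ofReal_ne_top
  -- integral of subset products
  have hA_meas : ∀ S : Finset (Fin t), MeasurableSet {ω | ∀ i ∈ S, X i ω = 1} := by
    intro S
    have hEq : {ω | ∀ i ∈ S, X i ω = 1} = ⋂ i ∈ (S : Set (Fin t)), (X i) ⁻¹' {1} := by
      ext ω; simp
    rw [hEq]
    exact MeasurableSet.biInter (S.countable_toSet)
      (fun i _ => (hmeas i) (measurableSet_singleton 1))
  have hg_int : ∀ S : Finset (Fin t),
      ∫⁻ ω, ENNReal.ofReal (∏ i ∈ S, X i ω) ∂μ = μ {ω | ∀ i ∈ S, X i ω = 1} := by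
    intro S
    have heq : ∀ ω, ENNReal.ofReal (∏ i ∈ S, X i ω)
        = Set.indicator {ω | ∀ i ∈ S, X i ω = 1} (fun _ => (1:ℝ≥0∞)) ω := by
      intro ω
      by_cases h : ∀ i ∈ S, X i ω = 1
      · have hm : ω ∈ {ω | ∀ i ∈ S, X i ω = 1} := h
        rw [Set.indicator_of_mem hm, Finset.prod_congr rfl h]
        simp
      · have hm : ω ∉ {ω | ∀ i ∈ S, X i ω = 1} := h
        rw [Set.indicator_of_notMem hm]
        push_neg at h
        obtain ⟨j, hjS, hj⟩ := h
        rw [Finset.prod_eq_zero hjS ((hbool j ω).resolve_right hj)]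
        simp
    simp_rw [heq]
    rw [lintegral_indicator (hA_meas S)]
    simp
  have hexpand : ∀ ω, ∏ i, (1 + η * X i ω)
      = ∑ S ∈ (Finset.univ : Finset (Fin t)).powerset, η ^ S.card * ∏ i ∈ S, X i ω := by
    intro ω
    have h := Finset.prod_add (fun i => η * X i ω) (fun _ => (1:ℝ)) Finset.univ
    simp only [Finset.prod_const_one, mul_one] at h
    calc ∏ i, (1 + η * X i ω) = ∏ i, (η * X i ω + 1) := by
          exact Finset.prod_congr rfl (fun i _ => by ring)
      _ = ∑ S ∈ (Finset.univ : Finset (Fin t)).powerset, ∏ i ∈ S, (η * X i ω) := h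
      _ = ∑ S ∈ (Finset.univ : Finset (Fin t)).powerset, η ^ S.card * ∏ i ∈ S, X i ω := by
          refine Finset.sum_congr rfl (fun S _ => ?_)
          rw [Finset.prod_mul_distrib, Finset.prod_const]
  have hterm_nonneg : ∀ (S : Finset (Fin t)) (ω : Ω), 0 ≤ η ^ S.card * ∏ i ∈ S, X i ω := by
    intro S ω
    exact mul_nonneg (pow_nonneg hηpos.le _) (Finset.prod_nonneg (fun i _ => hXnn i ω))
  have hbound : ∫⁻ ω, f ω ∂μ ≤ ENNReal.ofReal ((1 + η * ζ) ^ t) := by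
    have h1 : ∫⁻ ω, f ω ∂μ
        = ∑ S ∈ (Finset.univ : Finset (Fin t)).powerset,
            ENNReal.ofReal (η ^ S.card) * μ {ω | ∀ i ∈ S, X i ω = 1} := by
      calc ∫⁻ ω, f ω ∂μ
          = ∫⁻ ω, ∑ S ∈ (Finset.univ : Finset (Fin t)).powerset,
              ENNReal.ofReal (η ^ S.card * ∏ i ∈ S, X i ω) ∂μ := by
            refine lintegral_congr (fun ω => ?_)
            show ENNReal.ofReal (∏ i, (1 + η * X i ω)) = _
            rw [hexpand ω, ENNReal.ofReal_sum_of_nonneg (fun S _ => hterm_nonneg S ω)]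
        _ = ∑ S ∈ (Finset.univ : Finset (Fin t)).powerset,
              ∫⁻ ω, ENNReal.ofReal (η ^ S.card * ∏ i ∈ S, X i ω) ∂μ := by
            refine lintegral_finset_sum _ (fun S _ => ?_)
            exact Measurable.ennreal_ofReal (measurable_const.mul
              (Finset.measurable_prod _ (fun i _ => hmeas i)))
        _ = ∑ S ∈ (Finset.univ : Finset (Fin t)).powerset,
              ENNReal.ofReal (η ^ S.card) * μ {ω | ∀ i ∈ S, X i ω = 1} := by
            refine Finset.sum_congr rfl (fun S _ => ?_)
            simp_rw [ENNReal.ofReal_mul (pow_nonneg hηpos.le _)]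
            rw [lintegral_const_mul _ (Measurable.ennreal_ofReal
              (Finset.measurable_prod _ (fun i _ => hmeas i))), hg_int S]
    rw [h1]
    have hsum : ∑ S ∈ (Finset.univ : Finset (Fin t)).powerset, (η * ζ) ^ S.card
        = (1 + η * ζ) ^ t := by
      have h := Finset.prod_add (fun _ => η * ζ) (fun _ => (1:ℝ))
        (Finset.univ : Finset (Fin t))
      simp only [Finset.prod_const_one, mul_one, Finset.prod_const, Finset.card_univ,
        Fintype.card_fin] at h
      rw [← h]
      ring_nf
    calc ∑ S ∈ (Finset.univ : Finset (Fin t)).powerset,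
            ENNReal.ofReal (η ^ S.card) * μ {ω | ∀ i ∈ S, X i ω = 1}
        ≤ ∑ S ∈ (Finset.univ : Finset (Fin t)).powerset,
            ENNReal.ofReal (η ^ S.card) * ENNReal.ofReal (ζ ^ S.card) := by
          exact Finset.sum_le_sum (fun S _ => mul_le_mul_right (hcorr S) _)
      _ = ∑ S ∈ (Finset.univ : Finset (Fin t)).powerset, ENNReal.ofReal ((η * ζ) ^ S.card) := by
          refine Finset.sum_congr rfl (fun S _ => ?_)
          rw [mul_pow, ENNReal.ofReal_mul (pow_nonneg hηpos.le _)]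
      _ = ENNReal.ofReal (∑ S ∈ (Finset.univ : Finset (Fin t)).powerset, (η * ζ) ^ S.card) := by
          rw [ENNReal.ofReal_sum_of_nonneg
            (fun S _ => pow_nonneg (mul_nonneg hηpos.le hζ0) _)]
      _ = ENNReal.ofReal ((1 + η * ζ) ^ t) := by rw [hsum]
  -- final numeric identity
  have hfinal : (1 + η * ζ) ^ t / c
      = exp (-(t : ℝ) * (γ * log (γ / ζ) + (1 - γ) * log ((1 - γ) / (1 - ζ)))) := by
    have h1 : 1 + η * ζ = (1 - ζ) / (1 - γ) := by
      rw [hη_def]; field_simp; ring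
    have h2 : 1 + η = γ * (1 - ζ) / (ζ * (1 - γ)) := by
      rw [hη_def]; field_simp; ring
    have hB : (1 + η * ζ) ^ t = exp ((t : ℝ) * log ((1 - ζ) / (1 - γ))) := by
      rw [exp_nat_mul, exp_log (div_pos h1ζ h1γ), h1]
    rw [hB, hc_def, ← Real.exp_sub]
    congr 1
    rw [h2, log_div h1ζ.ne' h1γ.ne',
      log_div (mul_pos hγpos h1ζ).ne' (mul_pos hζpos h1γ).ne',
      log_mul hγpos.ne' h1ζ.ne', log_mul hζpos.ne' h1γ.ne',
      log_div hγpos.ne' hζpos.ne', log_div h1γ.ne' h1ζ.ne']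
    ring
  calc μ {ω | γ * t ≤ ∑ i, X i ω}
      ≤ μ {ω | ENNReal.ofReal c ≤ f ω} := measure_mono hsubset
    _ ≤ (∫⁻ ω, f ω ∂μ) / ENNReal.ofReal c := hmarkov
    _ ≤ ENNReal.ofReal ((1 + η * ζ) ^ t) / ENNReal.ofReal c :=
        ENNReal.div_le_div_right hbound _
    _ = ENNReal.ofReal ((1 + η * ζ) ^ t / c) := (ENNReal.ofReal_div_of_pos hcpos).symm
    _ = ENNReal.ofReal
        (exp (-(t : ℝ) * (γ * log (γ / ζ) + (1 - γ) * log ((1 - γ) / (1 - ζ))))) := by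
        rw [hfinal]
end

section
/- Under the relations of the previous context, the quantum value of I₃ satisfies w_Q = 2cosφ_b(cosφ_a − 1) + 2sinφ_a(sinφ_b + 1)sin(θ/2) = √(2(−3 + cosθ + 2√(3 + cos²θ))) · (3 − cosθ + √(3 + cos²θ)) / (1 + cosθ). -/
open Real

/-- Closed-form quantum value of the 3-input chained Bell expression:
`w_Q = 2cosφ_b(cosφ_a − 1) + 2sinφ_a(sinφ_b + 1)sin(θ/2)
     = √(2(−3 + cosθ + 2√(3+cos²θ))) (3 − cosθ + √(3+cos²θ)) / (1 + cosθ)`,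
with `cosφ_a = (1 − cosθ − √(3+cos²θ))/(1+cosθ)`,
`sinφ_b = (2 − √(3+cos²θ))/(1+cosθ)`, `sinφ_a = +√(1−cos²φ_a)`,
`cosφ_b = −√(1−sin²φ_b)`. -/
theorem chain3_quantum_value_closed_form (θ : ℝ) (hθ0 : 0 < θ) (hθπ : θ < π) :
    letI ca : ℝ := (1 - cos θ - sqrt (3 + cos θ ^ 2)) / (1 + cos θ)
    letI sb : ℝ := (2 - sqrt (3 + cos θ ^ 2)) / (1 + cos θ)
    letI sa : ℝ := sqrt (1 - ca ^ 2)
    letI cb : ℝ := -sqrt (1 - sb ^ 2)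
    2 * cb * (ca - 1) + 2 * sa * (sb + 1) * sin (θ / 2)
      = sqrt (2 * (-3 + cos θ + 2 * sqrt (3 + cos θ ^ 2)))
          * (3 - cos θ + sqrt (3 + cos θ ^ 2)) / (1 + cos θ) := by
  set c : ℝ := cos θ with hc
  have hc1 : -1 < c := by
    have h := Real.strictAntiOn_cos
      ⟨hθ0.le, hθπ.le⟩ ⟨Real.pi_pos.le, le_rfl⟩ hθπ
    simpa using h
  have hc2 : c < 1 := by
    have h := Real.strictAntiOn_cos
      ⟨le_rfl, Real.pi_pos.le⟩ ⟨hθ0.le, hθπ.le⟩ hθ0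
    simpa using h
  have h1c : (0:ℝ) < 1 + c := by linarith
  have h1c' : (0:ℝ) < 1 - c := by linarith
  set s : ℝ := sqrt (3 + c ^ 2) with hsdef
  have hs0 : 0 ≤ s := Real.sqrt_nonneg _
  have hs2 : s ^ 2 = 3 + c ^ 2 := Real.sq_sqrt (by positivity)
  have hcsq : c ^ 2 < 1 := by nlinarith
  have hslt2 : s < 2 := by
    have h : s ^ 2 < 2 ^ 2 := by nlinarith
    exact lt_of_pow_lt_pow_left₀ 2 (by norm_num) h
  have h2cs : 0 < 2 * c + s := by
    have h : (-(2 * c)) ^ 2 < s ^ 2 := by nlinarith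
    have := lt_of_pow_lt_pow_left₀ 2 hs0 h
    linarith
  have h1cs : 0 < c - 1 + s := by
    have h : (1 - c) ^ 2 < s ^ 2 := by nlinarith
    have := lt_of_pow_lt_pow_left₀ 2 hs0 h
    linarith
  have h3cs : 0 < 3 + c - s := by
    have h : s ^ 2 < (3 + c) ^ 2 := by nlinarith
    have := lt_of_pow_lt_pow_left₀ 2 (by linarith) h
    linarith
  have hDpos : 0 < -3 + c + 2 * s := by
    have h : (3 - c) ^ 2 < (2 * s) ^ 2 := by nlinarith
    have := lt_of_pow_lt_pow_left₀ 2 (by linarith) h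
    linarith
  set D : ℝ := sqrt (2 * (-3 + c + 2 * s)) with hDdef
  have hsin : sin (θ / 2) = sqrt ((1 - c) / 2) := by
    refine Real.sin_half_eq_sqrt hθ0.le ?_
    have := Real.pi_pos
    linarith
  set A : ℝ := (2 - s) * (2 * c + s) with hAdef
  have hA0 : 0 ≤ A := mul_nonneg (by linarith) (by linarith)
  have e1 : sqrt (1 - ((1 - c - s) / (1 + c)) ^ 2) = sqrt A / (1 + c) := by
    have hca2 : 1 - ((1 - c - s) / (1 + c)) ^ 2 = A / (1 + c) ^ 2 := by
      rw [hAdef]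
      field_simp
      ring
    rw [hca2, Real.sqrt_div hA0, Real.sqrt_sq h1c.le]
  have e2 : sqrt (1 - ((2 - s) / (1 + c)) ^ 2) = D / (1 + c) := by
    have hsb2 : 1 - ((2 - s) / (1 + c)) ^ 2 = 2 * (-3 + c + 2 * s) / (1 + c) ^ 2 := by
      field_simp
      linear_combination -hs2
    rw [hsb2, Real.sqrt_div (by positivity), Real.sqrt_sq h1c.le, hDdef]
  have e3 : sqrt A * sqrt ((1 - c) / 2) = D * ((1 - c) / 2) := by
    rw [← Real.sqrt_mul hA0]
    have harg : A * ((1 - c) / 2) = 2 * (-3 + c + 2 * s) * ((1 - c) / 2) ^ 2 := by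
      rw [hAdef]
      linear_combination (-(1 - c) / 2) * hs2
    rw [harg, Real.sqrt_mul (by positivity : (0:ℝ) ≤ 2 * (-3 + c + 2 * s)),
      Real.sqrt_sq (by positivity : (0:ℝ) ≤ (1 - c) / 2), hDdef]
  rw [hsin, e1, e2]
  set q : ℝ := sqrt ((1 - c) / 2) with hq
  set a : ℝ := sqrt A with ha
  field_simp
  linear_combination (2 * (3 + c - s)) * e3
end

section
/- For the 3-input chained Bell expression I₃ with no-signalling value w_NS ∈ [4, 6], the no-signalling guessing probability of Alice's outcome for setting A₀ satisfies P_g(A₀|E) = −w_NS/4 + 2; in particular P_g = 1 at the classical value w_NS = 4 and P_g = 1/2 at the maximal no-signalling value w_NS = 6. As an inequality: any no-signalling tripartite behavior whose Alice–Bob marginal achieves chained value w satisfies P_g(A₀|E) ≤ 2 − w/4. -/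
open BigOperators

lemma chain3_bip (p : Fin 2 → Fin 2 → Fin 3 → Fin 3 → ℝ)
    (hpos : ∀ a b x y, 0 ≤ p a b x y)
    (hA : ∀ b x x' y, ∑ a, p a b x y = ∑ a, p a b x' y)
    (hB : ∀ a x y y', ∑ b, p a b x y = ∑ b, p a b x y')
    (c : Fin 2) :
    (∑ a, ∑ b, (if a = b then (1:ℝ) else -1) * p a b 0 0)
    + (∑ a, ∑ b, (if a = b then (1:ℝ) else -1) * p a b 1 0)
    + (∑ a, ∑ b, (if a = b then (1:ℝ) else -1) * p a b 1 1)
    + (∑ a, ∑ b, (if a = b then (1:ℝ) else -1) * p a b 2 1)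
    + (∑ a, ∑ b, (if a = b then (1:ℝ) else -1) * p a b 2 2)
    - (∑ a, ∑ b, (if a = b then (1:ℝ) else -1) * p a b 0 2)
    + 4 * (∑ b, p c b 0 0) ≤ 8 * (∑ a, ∑ b, p a b 0 0) := by
  have h1 := hA 0 0 1 0
  have h2 := hA 1 0 1 0
  have h3 := hA 0 1 2 1
  have h4 := hA 1 1 2 1
  have h5 := hA 0 2 0 2
  have h6 := hA 1 2 0 2
  have h7 := hB 0 1 0 1
  have h8 := hB 1 1 0 1
  have h9 := hB 0 2 1 2
  have h10 := hB 1 2 1 2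
  have h11 := hB 0 0 0 2
  have h12 := hB 1 0 0 2
  simp only [Fin.sum_univ_two] at h1 h2 h3 h4 h5 h6 h7 h8 h9 h10 h11 h12 ⊢
  norm_num
  fin_cases c <;>
  · simp only [Fin.mk_zero, Fin.mk_one, Fin.sum_univ_two]
    linarith [hpos 0 0 0 0, hpos 0 1 0 0, hpos 1 0 0 0, hpos 1 1 0 0,
      hpos 0 0 1 0, hpos 0 1 1 0, hpos 1 0 1 0, hpos 1 1 1 0,
      hpos 0 0 1 1, hpos 0 1 1 1, hpos 1 0 1 1, hpos 1 1 1 1,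
      hpos 0 0 2 1, hpos 0 1 2 1, hpos 1 0 2 1, hpos 1 1 2 1,
      hpos 0 0 2 2, hpos 0 1 2 2, hpos 1 0 2 2, hpos 1 1 2 2,
      hpos 0 0 0 2, hpos 0 1 0 2, hpos 1 0 0 2, hpos 1 1 0 2]

/-- For the 3-input chained Bell expression `I₃`, any no-signalling tripartite
behavior whose Alice–Bob marginal achieves chained value `w` gives Eve a
guessing probability for Alice's setting `A₀` of at most `2 − w/4`. -/
theorem chain3_ns_guessing_bound
    (P : Fin 2 → Fin 2 → Fin 2 → Fin 3 → Fin 3 → Fin 3 → ℝ)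
    (hpos : ∀ a b e x y z, 0 ≤ P a b e x y z)
    (hnorm : ∀ x y z, ∑ a, ∑ b, ∑ e, P a b e x y z = 1)
    -- no-signalling: marginals are independent of the remaining party's input
    (hnsA : ∀ b e x x' y z, ∑ a, P a b e x y z = ∑ a, P a b e x' y z)
    (hnsB : ∀ a e x y y' z, ∑ b, P a b e x y z = ∑ b, P a b e x y' z)
    (hnsE : ∀ a b x y z z', ∑ e, P a b e x y z = ∑ e, P a b e x y z')
    (w : ℝ)
    -- the Alice–Bob marginal achieves chained value `w`
    (hw : letI E : Fin 3 → Fin 3 → ℝ := fun x y =>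
            ∑ a, ∑ b, (if a = b then (1:ℝ) else -1) * ∑ e, P a b e x y 0
          E 0 0 + E 1 0 + E 1 1 + E 2 1 + E 2 2 - E 0 2 = w) :
    ∀ zstar : Fin 3, ∑ a, ∑ b, P a b a 0 0 zstar ≤ 2 - w / 4 := by
  intro zstar
  have h0 := chain3_bip (fun a b x y => P a b 0 x y zstar)
    (fun a b x y => hpos a b 0 x y zstar)
    (fun b x x' y => hnsA b 0 x x' y zstar)
    (fun a x y y' => hnsB a 0 x y y' zstar) 0
  have h1 := chain3_bip (fun a b x y => P a b 1 x y zstar)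
    (fun a b x y => hpos a b 1 x y zstar)
    (fun b x x' y => hnsA b 1 x x' y zstar)
    (fun a x y y' => hnsB a 1 x y y' zstar) 1
  have hn := hnorm 0 0 zstar
  have e1 := fun a b => hnsE a b 0 0 0 zstar
  have e2 := fun a b => hnsE a b 1 0 0 zstar
  have e3 := fun a b => hnsE a b 1 1 0 zstar
  have e4 := fun a b => hnsE a b 2 1 0 zstar
  have e5 := fun a b => hnsE a b 2 2 0 zstar
  have e6 := fun a b => hnsE a b 0 2 0 zstar
  have e1a := e1 0 0; have e1b := e1 0 1; have e1c := e1 1 0; have e1d := e1 1 1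
  have e2a := e2 0 0; have e2b := e2 0 1; have e2c := e2 1 0; have e2d := e2 1 1
  have e3a := e3 0 0; have e3b := e3 0 1; have e3c := e3 1 0; have e3d := e3 1 1
  have e4a := e4 0 0; have e4b := e4 0 1; have e4c := e4 1 0; have e4d := e4 1 1
  have e5a := e5 0 0; have e5b := e5 0 1; have e5c := e5 1 0; have e5d := e5 1 1
  have e6a := e6 0 0; have e6b := e6 0 1; have e6c := e6 1 0; have e6d := e6 1 1
  simp only [Fin.sum_univ_two] at *
  norm_num at h0 h1 hw ⊢
  linarith [h0, h1, hn, hw, e1a, e1b, e1c, e1d, e2a, e2b, e2c, e2d, e3a, e3b, e3c, e3d, e4a, e4b, e4c, e4d, e5a, e5b, e5c, e5d, e6a, e6b, e6c, e6d]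
end
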